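/- Let T be a finite lattice, X a chain in T with ⊥ ∈ X and i_X : X → T the inclusion. Let φ : X → T satisfy: φ is order-preserving, φ(⊥) = ⊥, φ(x) ≥ x for all x, φ(y) = φ(x) whenever x ≤ y ≤ φ(x), and φ ≠ i_X (i.e. φ(y) > y for some y). Let D̄ = φ(X) ∪ {⊤} and C̄ = (⋃_{x∈X} [x, φ(x)]) ∪ {⊤}. Then the Möbius function μ(D̄, ∞) of the poset of chains of C̄ containing ⊥ and ⊤ (ordered by inclusion, with adjoined top ∞) vanishes: μ(D̄, ∞) = 0. -/

import Mathlib

attribute [local instance] Classical.propDecidable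
attribute [local instance] Fintype.toLocallyFiniteOrder
local instance {X : Type*} [Fintype X] : Fintype (WithTop X) :=
  inferInstanceAs (Fintype (Option X))

open IncidenceAlgebra Finset

section Aux

variable {α : Type*} [PartialOrder α] [Fintype α] [DecidableEq α] [LocallyFiniteOrder α]

lemma mu_insert_aux
    (a : α) (q p : α → Prop) (i : α → α)
    (hq : ∀ c, a ≤ c → q c → c < i c)
    (hqp : ∀ c, a ≤ c → q c → p (i c))
    (hdisj : ∀ d, p d → ¬ q d)
    (hdown : ∀ c d, q c → d ≤ c → q d)
    (hmono : ∀ c e, e ≤ c → i e ≤ i c)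
    (hinj : ∀ c e, q c → q e → i c = i e → c = e)
    (hdec : ∀ c, a ≤ c → q c → ∀ d, a ≤ d → d ≤ i c →
      (q d ∧ d ≤ c) ∨ (∃ e, a ≤ e ∧ q e ∧ e ≤ c ∧ d = i e)) :
    ∀ c, a ≤ c → q c → mu ℤ a (i c) = - mu ℤ a c := by
  classical
  suffices H : ∀ n, ∀ c, (Icc a c).card ≤ n → a ≤ c → q c → mu ℤ a (i c) = - mu ℤ a c by
    exact fun c hac hqc => H _ c le_rfl hac hqc
  intro n
  induction n with
  | zero =>
    intro c hcard hac _
    have : c ∈ Icc a c := mem_Icc.mpr ⟨hac, le_rfl⟩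
    have : 0 < (Icc a c).card := Finset.card_pos.mpr ⟨c, this⟩
    omega
  | succ n IH =>
    intro c hcard hac hqc
    have hlt : c < i c := hq c hac hqc
    have hne : a ≠ i c := ne_of_lt (lt_of_le_of_lt hac hlt)
    rw [mu_eq_neg_sum_Ico_of_ne hne]
    have hset : Ico a (i c) = Icc a c ∪ (Ico a c).image i := by
      ext d
      simp only [mem_Ico, mem_Icc, mem_union, mem_image]
      constructor
      · rintro ⟨had, hdlt⟩
        rcases hdec c hac hqc d had hdlt.le with ⟨_, hdc⟩ | ⟨e, hae, hqe, hec, rfl⟩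
        · exact Or.inl ⟨had, hdc⟩
        · refine Or.inr ⟨e, ⟨hae, lt_of_le_of_ne hec ?_⟩, rfl⟩
          rintro rfl; exact absurd rfl hdlt.ne
      · rintro (⟨had, hdc⟩ | ⟨e, ⟨hae, helt⟩, rfl⟩)
        · exact ⟨had, lt_of_le_of_lt hdc hlt⟩
        · have hqe : q e := hdown c e hqc helt.le
          refine ⟨hae.trans (hq e hae hqe).le, lt_of_le_of_ne (hmono c e helt.le) ?_⟩
          intro h; exact absurd (hinj e c hqe hqc h) helt.ne
    have hdisjoint : Disjoint (Icc a c) ((Ico a c).image i) := by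
      rw [Finset.disjoint_right]
      rintro d hd hd'
      simp only [mem_image, mem_Ico] at hd
      obtain ⟨e, ⟨hae, helt⟩, rfl⟩ := hd
      exact hdisj _ (hqp e hae (hdown c e hqc helt.le))
        (hdown c _ hqc (mem_Icc.mp hd').2)
    rw [hset, Finset.sum_union hdisjoint, Finset.sum_image ?hi]
    case hi =>
      intro x hx y hy hxy
      exact hinj x y (hdown c x hqc (mem_Ico.mp hx).2.le)
        (hdown c y hqc (mem_Ico.mp hy).2.le) hxy
    have hIH : ∀ e ∈ Ico a c, mu ℤ a (i e) = - mu ℤ a e := by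
      intro e he
      rw [mem_Ico] at he
      refine IH e ?_ he.1 (hdown c e hqc he.2.le)
      have hss : Icc a e ⊂ Icc a c := by
        refine (Finset.ssubset_iff_of_subset (Finset.Icc_subset_Icc_right he.2.le)).mpr
          ⟨c, mem_Icc.mpr ⟨hac, le_rfl⟩, fun hcmem => ?_⟩
        exact absurd ((mem_Icc.mp hcmem).2.trans_lt he.2) (lt_irrefl c)
      have := Finset.card_lt_card hss
      omega
    rw [Finset.sum_congr rfl hIH, Finset.Icc_eq_cons_Ico hac, Finset.sum_cons,
      Finset.sum_neg_distrib]
    ring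

lemma mu_top_aux
    (a b : α) (q p : α → Prop) (i : α → α)
    (hab : a ≠ b) (htop : ∀ d, d ≤ b)
    (hq : ∀ c, a ≤ c → q c → c < i c)
    (hqp : ∀ c, a ≤ c → q c → p (i c))
    (hdisj : ∀ d, p d → ¬ q d)
    (hdown : ∀ c d, q c → d ≤ c → q d)
    (hmono : ∀ c e, e ≤ c → i e ≤ i c)
    (hinj : ∀ c e, q c → q e → i c = i e → c = e)
    (hdec : ∀ c, a ≤ c → q c → ∀ d, a ≤ d → d ≤ i c →
      (q d ∧ d ≤ c) ∨ (∃ e, a ≤ e ∧ q e ∧ e ≤ c ∧ d = i e))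
    (hib : ∀ c, q c → i c ≠ b)
    (hcover : ∀ d, a ≤ d → d ≠ b → q d ∨ ∃ e, a ≤ e ∧ q e ∧ d = i e) :
    mu ℤ a b = 0 := by
  classical
  have key := mu_insert_aux a q p i hq hqp hdisj hdown hmono hinj hdec
  rw [mu_eq_neg_sum_Ico_of_ne hab]
  set s : Finset α := (Ico a b).filter q with hs
  have hset : Ico a b = s ∪ s.image i := by
    ext d
    simp only [hs, mem_union, mem_filter, mem_image, mem_Ico]
    constructor
    · rintro ⟨had, hdb⟩
      rcases hcover d had hdb.ne with hqd | ⟨e, hae, hqe, rfl⟩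
      · exact Or.inl ⟨⟨had, hdb⟩, hqd⟩
      · exact Or.inr ⟨e, ⟨⟨hae, lt_of_le_of_lt (hq e hae hqe).le hdb⟩, hqe⟩, rfl⟩
    · rintro (⟨hd, _⟩ | ⟨e, ⟨⟨hae, _⟩, hqe⟩, rfl⟩)
      · exact hd
      · exact ⟨hae.trans (hq e hae hqe).le,
          lt_of_le_of_ne (htop _) (hib e hqe)⟩
  have hdisjoint : Disjoint s (s.image i) := by
    rw [Finset.disjoint_right]
    rintro d hd hd'
    simp only [hs, mem_image, mem_filter, mem_Ico] at hd hd'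
    obtain ⟨e, ⟨⟨hae, _⟩, hqe⟩, rfl⟩ := hd
    exact hdisj _ (hqp e hae hqe) hd'.2
  rw [hset, Finset.sum_union hdisjoint, Finset.sum_image ?hi]
  case hi =>
    intro x hx y hy hxy
    simp only [hs, Finset.mem_coe, mem_filter] at hx hy
    exact hinj x y hx.2 hy.2 hxy
  have : ∀ e ∈ s, mu ℤ a (i e) = - mu ℤ a e := by
    intro e he
    simp only [hs, mem_filter, mem_Ico] at he
    exact key e he.1.1 he.2
  rw [Finset.sum_congr rfl this, Finset.sum_neg_distrib]
  ring

end Aux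

section Main

variable {T : Type*} [Lattice T] [Fintype T] [BoundedOrder T]

/-- The set `C̄`. -/
private noncomputable abbrev Cbar (X : Finset T) (φ : T → T) : Finset T :=
  X.biUnion (fun x => Finset.Icc x (φ x)) ∪ {⊤}

/-- The poset of chains in `C̄` containing `⊥` and `⊤`. -/
private abbrev ChainP (X : Finset T) (φ : T → T) :=
  {A : Finset T //
      A ⊆ X.biUnion (fun x => Finset.Icc x (φ x)) ∪ {⊤}
        ∧ IsChain (· ≤ ·) (A : Set T) ∧ ⊥ ∈ A ∧ ⊤ ∈ A}

end Main

/-- Let `X` be a chain in a finite lattice `T` with `⊥ ∈ X` and let `φ` be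
order-preserving on `X` with `φ ⊥ = ⊥`, `φ x ≥ x`, `φ y = φ x` whenever
`x ≤ y ≤ φ x` (for `x, y ∈ X`), and `φ y > y` for some `y ∈ X`. Let
`D̄ = φ(X) ∪ {⊤}` and `C̄ = (⋃_{x ∈ X} [x, φ x]) ∪ {⊤}`. Then the Möbius function
`μ(D̄, ∞)` of the poset of chains contained in `C̄` containing `⊥` and `⊤`
(ordered by inclusion, with adjoined top `∞`) vanishes. -/
theorem mobius_vanishes_of_strict
    {T : Type*} [Lattice T] [Fintype T] [BoundedOrder T]
    (X : Finset T) (hX : IsChain (· ≤ ·) (X : Set T)) (hXbot : ⊥ ∈ X)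
    (φ : T → T)
    (hmono : ∀ x ∈ X, ∀ y ∈ X, x ≤ y → φ x ≤ φ y)
    (hφbot : φ ⊥ = ⊥)
    (hge : ∀ x ∈ X, x ≤ φ x)
    (hc : ∀ x ∈ X, ∀ y ∈ X, x ≤ y → y ≤ φ x → φ y = φ x)
    (hstrict : ∃ y ∈ X, y < φ y)
    (D : {A : Finset T //
          A ⊆ X.biUnion (fun x => Finset.Icc x (φ x)) ∪ {⊤}
            ∧ IsChain (· ≤ ·) (A : Set T) ∧ ⊥ ∈ A ∧ ⊤ ∈ A})
    (hD : (D : Finset T) = X.image φ ∪ {⊤}) :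
    mu ℤ
      (D : WithTop {A : Finset T //
          A ⊆ X.biUnion (fun x => Finset.Icc x (φ x)) ∪ {⊤}
            ∧ IsChain (· ≤ ·) (A : Set T) ∧ ⊥ ∈ A ∧ ⊤ ∈ A}) ⊤ = 0 := by
  classical
  -- choose y minimal in X with y < φ y
  obtain ⟨y₀, hy₀X, hy₀⟩ := hstrict
  have hSne : (X.filter (fun x => x < φ x)).Nonempty := ⟨y₀, by simp [hy₀X, hy₀]⟩
  obtain ⟨y, hyM⟩ := Finset.exists_minimal hSne
  have hyS : y ∈ X.filter (fun x => x < φ x) := hyM.1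
  have hymin' : ∀ x ∈ X.filter (fun x => x < φ x), ¬ x < y :=
    fun x hx hlt => not_lt_of_ge (hyM.2 hx hlt.le) hlt
  rw [Finset.mem_filter] at hyS
  obtain ⟨hyX, hylt⟩ := hyS
  have hymin : ∀ x ∈ X, x < φ x → y ≤ x := by
    intro x hx hxlt
    rcases hX.total (by exact_mod_cast hyX) (by exact_mod_cast hx) with h | h
    · exact h
    · rcases eq_or_lt_of_le h with h' | h'
      · exact h'.ge
      · exact absurd h' (hymin' x (Finset.mem_filter.mpr ⟨hx, hxlt⟩))
  have hybot : y ≠ ⊥ := by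
    rintro rfl; rw [hφbot] at hylt; exact absurd hylt (lt_irrefl _)
  have hytop : y ≠ ⊤ := by
    rintro rfl; exact absurd (le_top.trans_lt hylt) (lt_irrefl _)
  have hyC : y ∈ Cbar X φ :=
    Finset.mem_union_left _
      (Finset.mem_biUnion.mpr ⟨y, hyX, Finset.mem_Icc.mpr ⟨le_rfl, hylt.le⟩⟩)
  -- y is comparable with everything in C
  have hycomp : ∀ a ∈ Cbar X φ, y ≤ a ∨ a ≤ y := by
    intro a ha
    rw [Cbar, Finset.mem_union] at ha
    rcases ha with ha | ha
    · obtain ⟨x, hxX, hax⟩ := Finset.mem_biUnion.mp ha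
      rw [Finset.mem_Icc] at hax
      rcases hX.total (by exact_mod_cast hxX) (by exact_mod_cast hyX) with h | h
      · rcases eq_or_lt_of_le h with rfl | h'
        · exact Or.inl hax.1
        · have hxfix : φ x = x := by
            by_contra hne
            exact absurd h' (not_lt_of_ge (hymin x hxX (lt_of_le_of_ne (hge x hxX) (Ne.symm hne))))
          exact Or.inr (hax.2.trans (hxfix.le.trans h'.le))
      · exact Or.inl (h.trans hax.1)
    · rw [Finset.mem_singleton] at ha
      exact Or.inl (ha ▸ le_top)
  -- y is not in D
  have hyD : y ∉ (D : Finset T) := by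
    rw [hD, Finset.mem_union, Finset.mem_singleton]
    rintro (hy | rfl)
    · obtain ⟨x, hxX, hxy⟩ := Finset.mem_image.mp hy
      have hxley : x ≤ y := hxy ▸ hge x hxX
      rcases eq_or_lt_of_le hxley with rfl | h'
      · rw [hxy] at hylt; exact absurd hylt (lt_irrefl _)
      · have : x < φ x := hxy ▸ h'
        exact absurd h' (not_lt_of_ge (hymin x hxX this))
    · exact hytop rfl
  -- the insertion map
  have insP : ∀ A : ChainP X φ, insert y A.1 ⊆ Cbar X φ
      ∧ IsChain (· ≤ ·) ((insert y A.1 : Finset T) : Set T)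
      ∧ ⊥ ∈ insert y A.1 ∧ ⊤ ∈ insert y A.1 := by
    intro A
    refine ⟨Finset.insert_subset hyC A.2.1, ?_, Finset.mem_insert_of_mem A.2.2.2.1,
      Finset.mem_insert_of_mem A.2.2.2.2⟩
    rw [Finset.coe_insert]
    refine A.2.2.1.insert ?_
    intro b hb _
    rcases hycomp b (A.2.1 hb) with h | h
    · exact Or.inl h
    · exact Or.inr h
  set ins : ChainP X φ → ChainP X φ := fun A => ⟨insert y A.1, insP A⟩ with hins
  set i : WithTop (ChainP X φ) → WithTop (ChainP X φ) := fun B => WithTop.map ins B with hi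
  set q : WithTop (ChainP X φ) → Prop := fun B => ∃ A : ChainP X φ, B = ↑A ∧ y ∉ A.1 with hq'
  set p : WithTop (ChainP X φ) → Prop := fun B => ∃ A : ChainP X φ, B = ↑A ∧ y ∈ A.1 with hp'
  -- erase as an element of the chain poset
  have eraseP : ∀ A : ChainP X φ, (↑D : WithTop (ChainP X φ)) ≤ ↑A →
      ∃ E : ChainP X φ, E.1 = A.1.erase y ∧ (↑D : WithTop (ChainP X φ)) ≤ ↑E ∧ y ∉ E.1 ∧
        (y ∈ A.1 → (↑A : WithTop (ChainP X φ)) = i ↑E) := by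
    intro A hDA
    rw [WithTop.coe_le_coe] at hDA
    have hDA' : (D : Finset T) ⊆ A.1 := hDA
    have hE : A.1.erase y ⊆ Cbar X φ ∧ IsChain (· ≤ ·) ((A.1.erase y : Finset T) : Set T)
        ∧ ⊥ ∈ A.1.erase y ∧ ⊤ ∈ A.1.erase y := by
      refine ⟨(Finset.erase_subset y A.1).trans A.2.1,
        A.2.2.1.mono ?_, Finset.mem_erase.mpr ⟨Ne.symm hybot, A.2.2.2.1⟩,
        Finset.mem_erase.mpr ⟨Ne.symm hytop, A.2.2.2.2⟩⟩
      exact_mod_cast Finset.erase_subset y A.1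
    refine ⟨⟨A.1.erase y, hE⟩, rfl, ?_, by simp, ?_⟩
    · rw [WithTop.coe_le_coe]
      show (D : Finset T) ⊆ A.1.erase y
      exact Finset.subset_erase.mpr ⟨hDA', hyD⟩
    · intro hyA
      rw [hi]
      show (↑A : WithTop (ChainP X φ)) = ↑(ins ⟨A.1.erase y, hE⟩)
      rw [WithTop.coe_inj, hins]
      exact Subtype.ext (by simp [Finset.insert_erase hyA])
  -- apply the abstract lemma
  refine mu_top_aux (↑D) ⊤ q p i WithTop.coe_ne_top (fun _ => le_top) ?_ ?_ ?_ ?_ ?_ ?_ ?_ ?_ ?_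
  · -- hq : c < i c
    rintro c hac ⟨A, rfl, hyA⟩
    rw [hi]
    show (↑A : WithTop (ChainP X φ)) < ↑(ins A)
    rw [WithTop.coe_lt_coe]
    constructor
    · show A.1 ⊆ (ins A).1
      rw [hins]; exact Finset.subset_insert y A.1
    · show ¬ (ins A).1 ⊆ A.1
      rw [hins]
      intro h
      exact hyA (h (Finset.mem_insert_self y A.1))
  · -- hqp : p (i c)
    rintro c hac ⟨A, rfl, hyA⟩
    exact ⟨ins A, rfl, by rw [hins]; exact Finset.mem_insert_self y A.1⟩
  · -- hdisj
    rintro d ⟨A, rfl, hyA⟩ ⟨A', hAA', hyA'⟩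
    rw [WithTop.coe_inj] at hAA'
    exact hyA' (hAA' ▸ hyA)
  · -- hdown
    rintro c d ⟨A, rfl, hyA⟩ hdc
    cases d with
    | top => exact absurd hdc (by simp)
    | coe B =>
      refine ⟨B, rfl, fun hyB => ?_⟩
      rw [WithTop.coe_le_coe] at hdc
      exact hyA (hdc hyB)
  · -- hmono
    intro c e hec
    cases c with
    | top => simp [hi]
    | coe A =>
      cases e with
      | top => exact absurd hec (by simp)
      | coe B =>
        rw [WithTop.coe_le_coe] at hec
        rw [hi]
        show (↑(ins B) : WithTop (ChainP X φ)) ≤ ↑(ins A)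
        rw [WithTop.coe_le_coe]
        show (ins B).1 ⊆ (ins A).1
        rw [hins]
        exact Finset.insert_subset_insert y hec
  · -- hinj
    rintro c e ⟨A, rfl, hyA⟩ ⟨B, rfl, hyB⟩ hie
    rw [hi] at hie
    have h0 : ins A = ins B := by
      simp only [WithTop.map_coe, WithTop.coe_inj] at hie
      exact hie
    rw [WithTop.coe_inj]
    have h1 : insert y A.1 = insert y B.1 := congrArg Subtype.val h0
    refine Subtype.ext ?_
    have h2 := congrArg (fun s => Finset.erase s y) h1
    simpa [Finset.erase_insert hyA, Finset.erase_insert hyB] using h2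
  · -- hdec
    rintro c hac ⟨A, rfl, hyA⟩ d had hdic
    cases d with
    | top =>
      exfalso
      rw [hi] at hdic
      exact absurd hdic (by simp)
    | coe B =>
      rw [hi] at hdic
      simp only [WithTop.map_coe, WithTop.coe_le_coe] at hdic
      have hBsub : B.1 ⊆ insert y A.1 := hdic
      by_cases hyB : y ∈ B.1
      · obtain ⟨E, hE1, hDE, hyE, hiE⟩ := eraseP B had
        refine Or.inr ⟨↑E, hDE, ⟨E, rfl, hyE⟩, ?_, hiE hyB⟩
        rw [WithTop.coe_le_coe]
        show E.1 ⊆ A.1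
        rw [hE1]
        intro t ht
        rw [Finset.mem_erase] at ht
        rcases Finset.mem_insert.mp (hBsub ht.2) with h | h
        · exact absurd h ht.1
        · exact h
      · refine Or.inl ⟨⟨B, rfl, hyB⟩, ?_⟩
        rw [WithTop.coe_le_coe]
        show B.1 ⊆ A.1
        intro t ht
        rcases Finset.mem_insert.mp (hBsub ht) with h | h
        · exact absurd (h ▸ ht) hyB
        · exact h
  · -- hib
    rintro c ⟨A, rfl, hyA⟩
    rw [hi]
    simp
  · -- hcover
    intro d had hdb
    cases d with
    | top => exact absurd rfl hdb
    | coe B =>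
      by_cases hyB : y ∈ B.1
      · obtain ⟨E, hE1, hDE, hyE, hiE⟩ := eraseP B had
        exact Or.inr ⟨↑E, hDE, ⟨E, rfl, hyE⟩, hiE hyB⟩
      · exact Or.inl ⟨B, rfl, hyB⟩
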